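/- Let G be a finite non-solvable group and x ∈ G such that the subgroup M generated by nil_G(x) is a maximal subgroup of G. Suppose the hypercenter Z*(G) of G is nontrivial and Z*(G) ≤ M. Then the cardinality of nil_G(x) is not equal to p³ for any prime p. -/

import Mathlib

/-- The nilpotentizer of `x` in `G`: the set of `y` such that `⟨x, y⟩` is nilpotent. -/
def nilpotentizer {G : Type*} [Group G] (x : G) : Set G :=
  {y | Group.IsNilpotent (Subgroup.closure ({x, y} : Set G))}

/-- The hypercenter of `G`: the terminal term of the upper central series of `G`
(for a finite group the series is eventually constant, so this supremum is
the stable value). -/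
def hypercenter (G : Type*) [Group G] : Subgroup G :=
  ⨆ n : ℕ, upperCentralSeries G n

/-!
Since `Z*(G) ≠ 1` the center `Z = Z(G)` is nontrivial, and `nil_G(x)` is the full preimage of
`nil_{G/Z}(xZ)`, because `⟨x, y⟩` is nilpotent iff its image modulo a central subgroup is. So
`|nil_G(x)| = |Z| · |nil_{G/Z}(xZ)|`, and as `Z ≤ ⟨nil_G(x)⟩`, the quotient `G/Z` is again
non-solvable with `⟨nil(xZ)⟩` maximal. It remains to rule out `|nil(x)| = p ^ k` with `k ≤ 2`.

As `nil(x)` is a union of cosets of `⟨x⟩`, `x` is a `p`-element and lies in a Sylow subgroup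
`P ⊆ nil(x)`. If `P = nil(x)`, then `P` is an abelian maximal subgroup: if it is normal, `G/P`
is cyclic; otherwise Burnside's transfer theorem gives a normal complement `K`, and `P`
normalizes some Sylow `q`-subgroup `Q` of `K`, so maximality of `P` forces `QP = G` and `K = Q`.
Either way `G` is solvable. Otherwise `|P| = p`, `|nil(x)| = p ^ 2`, and in each nilpotent
`⟨x, y⟩` the subgroup `⟨x⟩` is a normal Sylow subgroup of prime order, hence central; thus
`nil(x) = C_G(x)` is a subgroup of order `p ^ 2`, contradicting `|P| = p`.
-/

open Subgroup Pointwise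
open scoped IsMulCommutative commutatorElement

section GroupTheory

variable {G : Type*} [Group G]

lemma isNilpotent_of_le {K L : Subgroup G} (h : K ≤ L) [Group.IsNilpotent L] :
    Group.IsNilpotent K :=
  Group.nilpotent_of_mulEquiv (subgroupOfEquivOfLe h)

lemma closure_pair_le {x y : G} {K : Subgroup G} (hx : x ∈ K) (hy : y ∈ K) :
    closure ({x, y} : Set G) ≤ K :=
  (closure_le K).2 (Set.insert_subset hx (Set.singleton_subset_iff.2 hy))

lemma le_normalizer_of_forall_conj_mem {P H : Subgroup G}
    (h : ∀ g ∈ P, ∀ x ∈ H, g * x * g⁻¹ ∈ H) : P ≤ normalizer H := by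
  intro g hg x
  refine ⟨h g hg x, fun hx => ?_⟩
  simpa [mul_assoc] using h g⁻¹ (inv_mem hg) _ hx

lemma card_dvd_card_of_mul_mem {T : Subgroup G} {S : Set G}
    (hS : ∀ y ∈ S, ∀ t ∈ T, y * t ∈ S) : Nat.card T ∣ Nat.card S := by
  have hsat : (QuotientGroup.mk ⁻¹' (QuotientGroup.mk '' S : Set (G ⧸ T)) : Set G) = S := by
    refine Set.Subset.antisymm ?_ (Set.subset_preimage_image _ _)
    rintro z ⟨y, hy, hyz⟩
    simpa using hS y hy _ (QuotientGroup.eq.1 hyz)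
  rw [← hsat, QuotientGroup.card_preimage_mk]
  exact dvd_mul_right _ _

lemma isCoatom_map_of_ker_le {H : Type*} [Group H] {φ : G →* H} (hφ : Function.Surjective φ)
    {M : Subgroup G} (hker : φ.ker ≤ M) (hM : IsCoatom M) : IsCoatom (M.map φ) := by
  have hM' : (M.map φ).comap φ = M := comap_map_eq_self hker
  refine ⟨fun htop => hM.1 ?_, fun X hX => ?_⟩
  · rw [← hM', htop, comap_top]
  · rw [← comap_lt_comap_of_surjective hφ, hM'] at hX
    rw [← comap_injective hφ |>.eq_iff, hM.2 _ hX, comap_top]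

lemma isCyclic_quotient_of_isCoatom {N : Subgroup G} [N.Normal] (hN : IsCoatom N) :
    IsCyclic (G ⧸ N) := by
  obtain ⟨g, -, hg⟩ := SetLike.exists_of_lt hN.lt_top
  have hlt : N < (zpowers (g : G ⧸ N)).comap (QuotientGroup.mk' N) := by
    refine lt_of_le_of_ne (fun n hn => ?_) fun h => hg ?_
    · simp [(QuotientGroup.eq_one_iff n).2 hn]
    · exact h ▸ mem_zpowers (g : G ⧸ N)
  have htop := comap_injective (QuotientGroup.mk'_surjective N) <|
    (hN.2 _ hlt).trans (comap_top _).symm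
  exact ⟨⟨g, (eq_top_iff' _).1 htop⟩⟩

lemma isSolvable_of_isCoatom_of_normal {N : Subgroup G} [N.Normal] (hN : IsCoatom N)
    [Group.IsSolvable N] : Group.IsSolvable G :=
  have := isCyclic_quotient_of_isCoatom hN
  (Group.isSolvable_iff_subgroup_quotient N).2 ⟨inferInstance, inferInstance⟩

lemma center_le_hypercenter : center G ≤ hypercenter G :=
  Subgroup.upperCentralSeries_one G ▸ le_iSup (Subgroup.upperCentralSeries G) 1

lemma hypercenter_eq_bot_of_center_eq_bot (h : center G = ⊥) : hypercenter G = ⊥ := by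
  have hstable (n : ℕ) : Subgroup.upperCentralSeries G 0 = Subgroup.upperCentralSeries G n :=
    Subgroup.upperCentralSeries.eq_ge_of_eq_succ n.zero_le
      (by rw [zero_add, Subgroup.upperCentralSeries_one, h]; rfl)
  exact iSup_eq_bot.2 fun n => (hstable n).symm

lemma le_center_of_normal_of_card_prime [Group.IsNilpotent G] {N : Subgroup G} [N.Normal]
    (hN : (Nat.card N).Prime) : N ≤ center G := by
  obtain ⟨c, hc⟩ := Group.IsNilpotent.nilpotent G
  suffices ∀ n, N ≤ Subgroup.upperCentralSeries G n → N ≤ center G from this c (hc ▸ le_top)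
  intro n
  induction n with
  | zero => exact fun h => h.trans bot_le
  | succ n ih =>
    intro hle
    by_cases hZ : N ≤ Subgroup.upperCentralSeries G n
    · exact ih hZ
    have : Fact (Nat.card N).Prime := ⟨hN⟩
    have hdisj : Disjoint (Subgroup.upperCentralSeries G n) N := subgroupOf_eq_bot.1 <|
      ((Subgroup.upperCentralSeries G n).subgroupOf N).eq_bot_or_eq_top_of_prime_card.resolve_right
        (mt subgroupOf_eq_top.1 hZ)
    intro g hg
    refine mem_center_iff.2 fun k => ?_
    have hgkN : ⁅g, k⁆ ∈ N := by
      simpa only [commutatorElement_def, mul_assoc] using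
        mul_mem hg (‹N.Normal›.conj_mem _ (inv_mem hg) k)
    exact (commutatorElement_eq_one_iff_mul_comm.1 <|
      hdisj.le_bot ⟨Subgroup.mem_upperCentralSeries_succ_iff.1 (hle hg) k, hgkN⟩).symm

end GroupTheory

section Nilpotentizer

variable {G : Type*} [Group G]

lemma subset_nilpotentizer {x : G} {K : Subgroup G} [Group.IsNilpotent K] (hx : x ∈ K) :
    (K : Set G) ⊆ nilpotentizer x :=
  fun _ hy => isNilpotent_of_le (closure_pair_le hx hy)

lemma centralizer_subset_nilpotentizer (x : G) :
    (centralizer {x} : Set G) ⊆ nilpotentizer x := by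
  intro y hy
  have hxy : Commute x y := mem_centralizer_singleton_iff.1 hy |>.symm
  have : IsMulCommutative (closure ({x, y} : Set G)) := isMulCommutative_closure <| by
    rintro a (rfl | rfl) b (rfl | rfl) <;> first | rfl | exact hxy | exact hxy.symm
  exact CommGroup.isNilpotent

lemma nilpotentizer_one : nilpotentizer (1 : G) = Set.univ :=
  Set.eq_univ_of_forall fun y =>
    centralizer_subset_nilpotentizer 1 (mem_centralizer_singleton_iff.2 (Commute.one_right y))

lemma card_zpowers_dvd_card_nilpotentizer (x : G) :
    Nat.card (zpowers x) ∣ Nat.card (nilpotentizer x) := by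
  refine card_dvd_card_of_mul_mem fun y (hy : Group.IsNilpotent _) t ht => ?_
  have hx : x ∈ closure ({x, y} : Set G) := subset_closure (Set.mem_insert x _)
  exact isNilpotent_of_le <| closure_pair_le hx <|
    mul_mem (subset_closure (Set.mem_insert_of_mem x rfl)) (zpowers_le.2 hx ht)

lemma isNilpotent_map_mk_center_iff (K : Subgroup G) :
    Group.IsNilpotent (K.map (QuotientGroup.mk' (center G))) ↔ Group.IsNilpotent K := by
  let f := ((QuotientGroup.mk' (center G)).comp K.subtype).rangeRestrict
  have hrange : ((QuotientGroup.mk' (center G)).comp K.subtype).range =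
      K.map (QuotientGroup.mk' (center G)) := by
    rw [MonoidHom.range_comp, range_subtype]
  rw [← hrange]
  refine ⟨fun _ => Subgroup.isNilpotent_of_ker_le_center f fun k hk => ?_,
    fun _ => Group.nilpotent_of_surjective f (MonoidHom.rangeRestrict_surjective _)⟩
  rw [MonoidHom.ker_rangeRestrict, MonoidHom.mem_ker, MonoidHom.comp_apply,
    QuotientGroup.mk'_apply, QuotientGroup.eq_one_iff] at hk
  exact mem_center_iff.2 fun l => Subtype.ext (mem_center_iff.1 hk l)

lemma nilpotentizer_eq_preimage_mk_center (x : G) :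
    nilpotentizer x = QuotientGroup.mk ⁻¹' nilpotentizer (x : G ⧸ center G) := by
  ext y
  simp only [nilpotentizer, Set.mem_ofPred_eq, Set.mem_preimage]
  rw [← isNilpotent_map_mk_center_iff, MonoidHom.map_closure, Set.image_pair]
  rfl

lemma card_nilpotentizer_eq_card_center_mul (x : G) :
    Nat.card (nilpotentizer x) =
      Nat.card (center G) * Nat.card (nilpotentizer (x : G ⧸ center G)) := by
  rw [nilpotentizer_eq_preimage_mk_center, QuotientGroup.card_preimage_mk]

lemma closure_nilpotentizer_mk_center (x : G) :
    closure (nilpotentizer (x : G ⧸ center G)) =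
      (closure (nilpotentizer x)).map (QuotientGroup.mk' (center G)) := by
  rw [MonoidHom.map_closure, nilpotentizer_eq_preimage_mk_center x, QuotientGroup.coe_mk',
    Set.image_preimage_eq _ QuotientGroup.mk_surjective]

end Nilpotentizer

section MaximalSylow

variable {G : Type*} [Group G] [Finite G] {p : ℕ} [Fact p.Prime]

lemma exists_sylow_le_normalizer {K P : Subgroup G} [K.Normal] (hP : IsPGroup p P)
    (hpK : ¬ p ∣ Nat.card K) (q : ℕ) [Fact q.Prime] :
    ∃ Q : Sylow q K, P ≤ normalizer ((Q : Subgroup K).map K.subtype) := by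
  let _ : MulAction P (Sylow q K) :=
    MulAction.compHom _ ((MulAut.conjNormal (H := K)).comp P.subtype)
  have hcard : ¬ p ∣ Nat.card (Sylow q K) := fun h =>
    hpK (h.trans ((Sylow.card_dvd_index default).trans (index_dvd_card _)))
  obtain ⟨Q, hQ⟩ := hP.nonempty_fixed_point_of_prime_not_dvd_card _ hcard
  refine ⟨Q, le_normalizer_of_forall_conj_mem ?_⟩
  rintro g hg _ ⟨k, hk, rfl⟩
  have hfix : (MulAut.conjNormal g : MulAut K) • (Q : Subgroup K) = Q :=
    congrArg Sylow.toSubgroup (hQ ⟨g, hg⟩)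
  refine ⟨MulAut.conjNormal g k, ?_, MulAut.conjNormal_apply g k⟩
  rw [← hfix]
  exact smul_mem_pointwise_smul k _ _ hk

lemma isPGroup_of_isComplement'_of_isCoatom {q : ℕ} [Fact q.Prime] {K P : Subgroup G}
    [K.Normal] (hP : IsPGroup p P) (hmax : IsCoatom P) (hKP : IsComplement' K P)
    (hpK : ¬ p ∣ Nat.card K) (hqK : q ∣ Nat.card K) : IsPGroup q K := by
  obtain ⟨Q, hPQ⟩ := exists_sylow_le_normalizer hP hpK q
  set Q' := (Q : Subgroup K).map K.subtype
  have hQ'K : Q' ≤ K := map_subtype_le _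
  have hQ'P : ¬ Q' ≤ P := by
    intro hle
    have hqQ : q ∣ Nat.card Q' := by
      rw [card_map_of_injective K.subtype_injective]
      exact Q.dvd_card_of_dvd_card hqK
    obtain ⟨n, hn⟩ := hP.exists_card_eq
    have hqp : q = p := (Nat.prime_dvd_prime_iff_eq Fact.out Fact.out).1 <|
      (Fact.out : q.Prime).dvd_of_dvd_pow (hn ▸ hqQ.trans (card_dvd_of_le hle))
    exact hpK (hqp ▸ hqK)
  have hPlt : P < normalizer Q' :=
    lt_of_le_of_ne hPQ fun h => hQ'P (h ▸ le_normalizer)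
  have : Q'.Normal := normalizer_eq_top_iff.1 (hmax.2 _ hPlt)
  have hsup : Q' ⊔ P = ⊤ :=
    hmax.2 _ (lt_of_le_of_ne le_sup_right fun h => hQ'P (h ▸ le_sup_left))
  -- Dedekind's modular law: `K = K ∩ Q'P = Q'(K ∩ P) = Q'`
  have hmod := mul_inf_assoc Q' P K hQ'K
  rw [inf_comm, hKP.disjoint.eq_bot, ← normal_mul Q' P, ← normal_mul Q' ⊥, hsup, sup_bot_eq,
    coe_top, Set.univ_inter] at hmod
  exact SetLike.coe_injective hmod ▸ Q.isPGroup'.map K.subtype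

theorem isSolvable_of_isCoatom_sylow (P : Sylow p G) [IsMulCommutative P]
    (hmax : IsCoatom (P : Subgroup G)) : Group.IsSolvable G := by
  rcases (le_normalizer (H := (P : Subgroup G))).lt_or_eq with hlt | heq
  · have : (P : Subgroup G).Normal := normalizer_eq_top_iff.1 (hmax.2 _ hlt)
    exact isSolvable_of_isCoatom_of_normal hmax
  have hNC : normalizer (P : Subgroup G) ≤ centralizer (P : Set G) := by
    rw [← heq]
    exact le_centralizer _
  set K := (MonoidHom.transferSylow P hNC).ker
  have hKP : IsComplement' K P := MonoidHom.ker_transferSylow_isComplement' P hNC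
  have hK1 : Nat.card K ≠ 1 := fun h =>
    hmax.1 (isComplement'_bot_left.1 (card_eq_one.1 h ▸ hKP))
  obtain ⟨q, hq, hqK⟩ := Nat.exists_prime_and_dvd hK1
  have := Fact.mk hq
  have hKq : IsPGroup q K := isPGroup_of_isComplement'_of_isCoatom P.isPGroup' hmax hKP
    (MonoidHom.not_dvd_card_ker_transferSylow P hNC) hqK
  have hquot : IsPGroup p (G ⧸ K) := by
    obtain ⟨n, hn⟩ := P.isPGroup'.exists_card_eq
    exact IsPGroup.of_card (hKP.symm.index_eq_card.trans hn)
  have := hKq.isNilpotent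
  have := hquot.isNilpotent
  exact (Group.isSolvable_iff_subgroup_quotient K).2 ⟨inferInstance, inferInstance⟩

end MaximalSylow

section SmallNilpotentizer

variable {p : ℕ} [hp : Fact p.Prime]

lemma isMulCommutative_of_card_eq_prime_pow {H : Type*} [Group H] {a : ℕ}
    (h : Nat.card H = p ^ a) (ha : a ≤ 2) : IsMulCommutative H := by
  rcases ha.lt_or_eq with ha | rfl
  · have : IsCyclic H := isCyclic_of_card_dvd_prime <|
      h ▸ (pow_dvd_pow p (Nat.lt_succ_iff.1 ha)).trans (pow_one p).dvd
    infer_instance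
  · exact IsPGroup.isMulCommutative_of_card_eq_prime_sq h

variable {G : Type*} [Group G] [Finite G]

/-- When `p ^ 2 ∤ |G|`, the Sylow `p`-subgroup of each nilpotent `⟨x, y⟩` is `⟨x⟩`,
a normal subgroup of prime order, hence central. -/
lemma nilpotentizer_eq_centralizer (hG : ¬ p ^ 2 ∣ Nat.card G) {x : G} (hx : orderOf x = p) :
    nilpotentizer x = centralizer {x} := by
  refine Set.Subset.antisymm (fun y hy => ?_) (centralizer_subset_nilpotentizer x)
  set K := closure ({x, y} : Set G)
  have : Group.IsNilpotent K := hy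
  let x' : K := ⟨x, subset_closure (Set.mem_insert x _)⟩
  let y' : K := ⟨y, subset_closure (Set.mem_insert_of_mem x rfl)⟩
  have hx' : Nat.card (zpowers x') = p ^ 1 := by rw [Nat.card_zpowers, orderOf_mk, hx, pow_one]
  obtain ⟨S, hxS⟩ := (IsPGroup.of_card hx').exists_le_sylow
  obtain ⟨n, hn⟩ := S.isPGroup'.exists_card_eq
  have h1 : p ^ 1 ∣ p ^ n := hx' ▸ hn ▸ card_dvd_of_le hxS
  have h2 : ¬ p ^ 2 ∣ p ^ n := fun h =>
    hG (h.trans (hn ▸ (card_subgroup_dvd_card (S : Subgroup K)).trans (card_subgroup_dvd_card K)))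
  have hn1 : n = 1 := by
    have := (Nat.pow_dvd_pow_iff_le_right hp.out.one_lt).1 h1
    have := mt (Nat.pow_dvd_pow p) h2
    omega
  have hScenter : (S : Subgroup K) ≤ center K :=
    le_center_of_normal_of_card_prime (by rw [hn, hn1, pow_one]; exact hp.out)
  exact mem_centralizer_singleton_iff.2 <|
    congrArg Subtype.val (mem_center_iff.1 (hScenter (hxS (mem_zpowers x'))) y')

theorem card_nilpotentizer_ne_prime_pow (hG : ¬ Group.IsSolvable G) {x : G}
    (hmax : IsCoatom (closure (nilpotentizer x))) {k : ℕ} (hk : k ≤ 2) :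
    Nat.card (nilpotentizer x) ≠ p ^ k := by
  intro hcard
  have hx1 : x ≠ 1 := by
    rintro rfl
    rw [nilpotentizer_one, Subgroup.closure_univ] at hmax
    exact hmax.1 rfl
  obtain ⟨j, -, hj⟩ :=
    (Nat.dvd_prime_pow hp.out).1 (hcard ▸ card_zpowers_dvd_card_nilpotentizer x)
  obtain ⟨P, hxP⟩ := (IsPGroup.of_card hj).exists_le_sylow
  have := P.isPGroup'.isNilpotent
  have hPsub : ((P : Subgroup G) : Set G) ⊆ nilpotentizer x :=
    subset_nilpotentizer (hxP (mem_zpowers x))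
  obtain ⟨a, ha⟩ := P.isPGroup'.exists_card_eq
  have hj0 : j ≠ 0 := by
    rintro rfl
    exact hx1 (zpowers_eq_bot.1 (card_eq_one.1 (hj.trans (pow_zero p))))
  have hja : j ≤ a :=
    (Nat.pow_dvd_pow_iff_le_right hp.out.one_lt).1 (hj ▸ ha ▸ card_dvd_of_le hxP)
  have hak : a ≤ k := (Nat.pow_le_pow_iff_right hp.out.one_lt).1 <|
    ha ▸ hcard ▸ Nat.card_mono (Set.toFinite _) hPsub
  rcases hak.lt_or_eq with hlt | rfl
  · have hG2 : ¬ p ^ 2 ∣ Nat.card G := fun h => by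
      have := (Nat.pow_dvd_pow_iff_le_right hp.out.one_lt).1 <|
        ha ▸ P.pow_dvd_card_of_pow_dvd_card h
      omega
    have hx : orderOf x = p := by rw [← Nat.card_zpowers, hj, show j = 1 by omega, pow_one]
    apply hG2
    rw [show 2 = k by omega, ← hcard, nilpotentizer_eq_centralizer hG2 hx]
    exact card_subgroup_dvd_card _
  · have hPeq : ((P : Subgroup G) : Set G) = nilpotentizer x :=
      Set.eq_of_subset_of_ncard_le hPsub <| by
        rw [← Nat.card_coe_set_eq, ← Nat.card_coe_set_eq, hcard, ← ha]; rfl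
    rw [← hPeq, closure_eq] at hmax
    have := isMulCommutative_of_card_eq_prime_pow ha hk
    exact hG (isSolvable_of_isCoatom_sylow P hmax)

end SmallNilpotentizer

theorem stmt_15 {G : Type*} [Group G] [Finite G] (hG : ¬ IsSolvable G) (x : G)
    (hmax : IsCoatom (Subgroup.closure (nilpotentizer x)))
    (hZ : hypercenter G ≠ ⊥)
    (hZM : hypercenter G ≤ Subgroup.closure (nilpotentizer x)) :
    ∀ p : ℕ, p.Prime → Nat.card (nilpotentizer x) ≠ p ^ 3 := by
  intro p hp hcard
  have := Fact.mk hp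
  have hGZ : ¬ Group.IsSolvable (G ⧸ center G) := fun h =>
    hG ((Group.isSolvable_iff_subgroup_quotient (center G)).2 ⟨inferInstance, h⟩)
  have hmaxZ : IsCoatom (closure (nilpotentizer (x : G ⧸ center G))) := by
    rw [closure_nilpotentizer_mk_center]
    refine isCoatom_map_of_ker_le (QuotientGroup.mk'_surjective _) ?_ hmax
    rw [QuotientGroup.ker_mk']
    exact center_le_hypercenter.trans hZM
  rw [card_nilpotentizer_eq_card_center_mul] at hcard
  obtain ⟨e, -, he⟩ := (Nat.dvd_prime_pow hp).1 (Dvd.intro _ hcard)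
  obtain ⟨k, -, hk⟩ := (Nat.dvd_prime_pow hp).1 (Dvd.intro_left _ hcard)
  have he0 : e ≠ 0 := by
    rintro rfl
    exact hZ (hypercenter_eq_bot_of_center_eq_bot (card_eq_one.1 he))
  have hek : e + k = 3 := Nat.pow_right_injective hp.two_le <|
    show p ^ (e + k) = p ^ 3 by rw [pow_add, ← he, ← hk, hcard]
  exact card_nilpotentizer_ne_prime_pow hGZ hmaxZ (by omega) hk
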